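/- Let f : {1,2,3,...} → ℝ be a nonnegative arithmetic function and let c ≥ 0 be a real number such that ∑_{m ≤ M} f(m) = c·M + O(M^{3/5}) as M → ∞. Then for every fixed integer k ≥ 1, as M → ∞, ∑_{m ≤ M} f^{*k}(m)/m = c^k · (log M)^k / k! + O((log M)^{k-1}). -/

import Mathlib

/-!
Write `S_k(x) = ∑_{m ≤ x} f^{*k}(m)/m`. Splitting `m = d e` gives
`S_{k+1}(x) = ∑_{d ≤ x} (f(d)/d) S_k(x/d)`. Abel summation against the hypothesis yields
`S_1(x) = c log x + O(1)`, and Abel summation against this in turn yields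
`∑_{d ≤ x} (f(d)/d) (log x - log d)^j = c (log x)^{j+1}/(j+1) + O((log x)^j)`.
Inserting the estimate `S_k(y) = c^k (log y)^k/k! + O((1 + log y)^{k-1})` at `y = x/d` into the
convolution identity, the second estimate evaluates the main terms and the first bounds the
accumulated error, which gives the estimate for `k + 1`, uniformly in `x ≥ 1`.
-/

open Filter Finset MeasureTheory Real

theorem exists_forall_abs_le_mul_of_isBigO {u v : ℝ → ℝ} (h : u =O[atTop] v)
    (hu : ∀ b, ∃ B, ∀ t ∈ Set.Icc 1 b, |u t| ≤ B) (hv : ∀ t, 1 ≤ t → 1 ≤ v t) :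
    ∃ C, ∀ t, 1 ≤ t → |u t| ≤ C * v t := by
  obtain ⟨C₁, hC₁⟩ := h.bound
  obtain ⟨b, hb⟩ := eventually_atTop.1 hC₁
  obtain ⟨B, hB⟩ := hu b
  refine ⟨max C₁ B, fun t ht => ?_⟩
  have hvt := hv t ht
  rcases le_total b t with hbt | htb
  · calc |u t| ≤ C₁ * v t := by
          simpa [abs_of_pos (one_pos.trans_le hvt)] using hb t hbt
      _ ≤ max C₁ B * v t := mul_le_mul_of_nonneg_right (le_max_left _ _) (by linarith)
  · have hut := hB t ⟨ht, htb⟩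
    calc |u t| ≤ max C₁ B := hut.trans (le_max_right _ _)
      _ ≤ max C₁ B * v t :=
          le_mul_of_one_le_right ((abs_nonneg _).trans (hut.trans (le_max_right _ _))) hvt

theorem exists_abs_sum_sub_mul_le_mul_rpow {f : ArithmeticFunction ℝ} (hf : ∀ n, 0 ≤ f n)
    {c θ : ℝ} (h : (fun M : ℝ => (∑ m ∈ Icc 1 ⌊M⌋₊, f m) - c * M) =O[atTop] fun M => M ^ θ)
    (hθ : 0 ≤ θ) : ∃ C, ∀ t, 1 ≤ t → |∑ m ∈ Icc 1 ⌊t⌋₊, f m - c * t| ≤ C * t ^ θ := by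
  refine exists_forall_abs_le_mul_of_isBigO h
    (fun b => ⟨∑ m ∈ Icc 1 ⌊b⌋₊, f m + |c| * b, fun t ht => ?_⟩)
    (fun t ht => Real.one_le_rpow ht hθ)
  have hmono : ∑ m ∈ Icc 1 ⌊t⌋₊, f m ≤ ∑ m ∈ Icc 1 ⌊b⌋₊, f m :=
    sum_le_sum_of_subset_of_nonneg (Icc_subset_Icc_right (Nat.floor_mono ht.2))
      fun m _ _ => hf m
  have hct : |c * t| ≤ |c| * b := by
    rw [abs_mul, abs_of_pos (one_pos.trans_le ht.1)]
    exact mul_le_mul_of_nonneg_left ht.2 (abs_nonneg c)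
  calc |∑ m ∈ Icc 1 ⌊t⌋₊, f m - c * t| ≤ |∑ m ∈ Icc 1 ⌊t⌋₊, f m| + |c * t| := abs_sub _ _
    _ ≤ ∑ m ∈ Icc 1 ⌊b⌋₊, f m + |c| * b := by
        rw [abs_of_nonneg (sum_nonneg fun m _ => hf m)]
        linarith

theorem sum_Icc_zero_eq_sum_Icc_one {M : Type*} [AddCommMonoid M] {g : ℕ → M} (hg : g 0 = 0)
    (N : ℕ) : ∑ k ∈ Icc 0 N, g k = ∑ k ∈ Icc 1 N, g k := by
  rw [Icc_eq_cons_Ioc (Nat.zero_le N), sum_cons, hg, zero_add, ← Icc_add_one_left_eq_Ioc,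
    zero_add]

/-- Abel summation, with the partial sums of `a` replaced by an approximation `G` that is accurate
to within `E`. -/
theorem abs_sum_mul_sub_le {a : ℕ → ℝ} (ha : a 0 = 0) {φ φ' G E : ℝ → ℝ} {x : ℝ} (hx : 1 ≤ x)
    (hφ : ∀ t ∈ Set.Icc 1 x, HasDerivAt φ (φ' t) t) (hφ' : ContinuousOn φ' (Set.Icc 1 x))
    (hG : ContinuousOn G (Set.Icc 1 x)) (hE : ContinuousOn E (Set.Icc 1 x))
    (hAG : ∀ t ∈ Set.Icc 1 x, |∑ k ∈ Icc 1 ⌊t⌋₊, a k - G t| ≤ E t) :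
    |∑ k ∈ Icc 1 ⌊x⌋₊, φ k * a k - (φ x * G x - ∫ t in 1..x, φ' t * G t)|
      ≤ |φ x| * E x + ∫ t in 1..x, |φ' t| * E t := by
  set A : ℝ → ℝ := fun t => ∑ k ∈ Icc 0 ⌊t⌋₊, a k
  have hA : ∀ t, A t = ∑ k ∈ Icc 1 ⌊t⌋₊, a k := fun t => sum_Icc_zero_eq_sum_Icc_one ha _
  have habel : ∑ k ∈ Icc 0 ⌊x⌋₊, φ k * a k
      = φ x * A x - ∫ t in Set.Ioc 1 x, deriv φ t * A t :=
    sum_mul_eq_sub_integral_mul₀ a ha x (fun t ht => (hφ t ht).differentiableAt)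
      (hφ'.integrableOn_Icc.congr_fun (fun t ht => (hφ t ht).deriv.symm) measurableSet_Icc)
  have hderiv : ∫ t in Set.Ioc 1 x, deriv φ t * A t = ∫ t in 1..x, φ' t * A t := by
    rw [intervalIntegral.integral_of_le hx]
    exact setIntegral_congr_fun measurableSet_Ioc fun t ht => by
      rw [(hφ t (Set.Ioc_subset_Icc_self ht)).deriv]
  have hφA : IntervalIntegrable (fun t => φ' t * A t) volume 1 x :=
    (intervalIntegrable_iff_integrableOn_Icc_of_le hx).2
      (integrableOn_mul_sum_Icc a zero_le_one hφ'.integrableOn_Icc)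
  have key : ∑ k ∈ Icc 1 ⌊x⌋₊, φ k * a k - (φ x * G x - ∫ t in 1..x, φ' t * G t)
      = φ x * (A x - G x) - ∫ t in 1..x, φ' t * (A t - G t) := by
    simp_rw [mul_sub]
    rw [← sum_Icc_zero_eq_sum_Icc_one (by simp [ha]), habel, hderiv,
      intervalIntegral.integral_sub (f := fun t => φ' t * A t) (g := fun t => φ' t * G t) hφA
        ((hφ'.mul hG).intervalIntegrable_of_Icc hx)]
    ring
  have hboundary : |φ x * (A x - G x)| ≤ |φ x| * E x := by
    rw [abs_mul, hA]
    exact mul_le_mul_of_nonneg_left (hAG x ⟨hx, le_rfl⟩) (abs_nonneg _)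
  have hintegral : |∫ t in 1..x, φ' t * (A t - G t)| ≤ ∫ t in 1..x, |φ' t| * E t := by
    rw [← Real.norm_eq_abs]
    refine intervalIntegral.norm_integral_le_of_norm_le (g := fun t => |φ' t| * E t) hx
      (Eventually.of_forall fun t ht => ?_) ((hφ'.abs.mul hE).intervalIntegrable_of_Icc hx)
    rw [Real.norm_eq_abs, abs_mul, hA]
    exact mul_le_mul_of_nonneg_left (hAG t (Set.Ioc_subset_Icc_self ht)) (abs_nonneg _)
  rw [key]
  exact (abs_sub _ _).trans (add_le_add hboundary hintegral)

theorem integral_comp_log_mul_inv {g : ℝ → ℝ} (hg : Continuous g) {x : ℝ} (hx : 0 < x) :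
    ∫ t in 1..x, g (log t) * t⁻¹ = ∫ u in 0..log x, g u := by
  have hpos : ∀ t ∈ Set.uIcc 1 x, 0 < t := fun t ht =>
    lt_of_lt_of_le (lt_min one_pos hx) ht.1
  simpa using intervalIntegral.integral_comp_mul_deriv
    (fun t ht => hasDerivAt_log (hpos t ht).ne')
    (continuousOn_inv₀.mono fun t ht => (hpos t ht).ne') hg

theorem integral_log_sub_pow_mul_inv (j : ℕ) {x : ℝ} (hx : 0 < x) :
    ∫ t in 1..x, (log x - log t) ^ j * t⁻¹ = log x ^ (j + 1) / (j + 1) := by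
  rw [integral_comp_log_mul_inv (g := fun u => (log x - u) ^ j) (by fun_prop) hx,
    intervalIntegral.integral_comp_sub_left (fun v => v ^ j), integral_pow]
  simp

theorem integral_log_sub_pow_mul_log_mul_inv (j : ℕ) {x : ℝ} (hx : 0 < x) :
    ∫ t in 1..x, (log x - log t) ^ j * log t * t⁻¹
      = log x ^ (j + 2) / ((j + 1) * (j + 2)) := by
  have hreflect := intervalIntegral.integral_comp_sub_left (fun v => v ^ j * (log x - v))
    (a := 0) (b := log x) (log x)
  simp only [sub_sub_cancel, sub_self, sub_zero] at hreflect
  rw [integral_comp_log_mul_inv (g := fun u => (log x - u) ^ j * u) (by fun_prop) hx, hreflect]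
  simp_rw [mul_sub]
  rw [intervalIntegral.integral_sub (f := fun v => v ^ j * log x) (g := fun v => v ^ j * v)
    (Continuous.intervalIntegrable (by fun_prop) _ _)
    (Continuous.intervalIntegrable (by fun_prop) _ _)]
  simp_rw [← pow_succ]
  rw [intervalIntegral.integral_mul_const, integral_pow, integral_pow]
  field_simp
  push_cast
  ring

theorem integral_rpow_sub_two_le {θ x : ℝ} (hθ : θ < 1) (hx : 1 ≤ x) :
    ∫ t in 1..x, t ^ (θ - 2) ≤ 1 / (1 - θ) := by
  have h0 : (0 : ℝ) ∉ Set.uIcc 1 x := by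
    rw [Set.uIcc_of_le hx]
    exact fun h => (zero_lt_one.trans_le h.1).false
  rw [integral_rpow (Or.inr ⟨by linarith, h0⟩), Real.one_rpow,
    show θ - 2 + 1 = -(1 - θ) by ring, div_neg, ← neg_div, neg_sub]
  have h1θ : 0 < 1 - θ := by linarith
  have : 0 ≤ x ^ (-(1 - θ)) := Real.rpow_nonneg (zero_le_one.trans hx) _
  gcongr
  linarith

theorem abs_sum_div_sub_mul_log_le {a : ℕ → ℝ} (ha : a 0 = 0) {c C θ : ℝ} (hθ : θ < 1)
    (hA : ∀ t, 1 ≤ t → |∑ k ∈ Icc 1 ⌊t⌋₊, a k - c * t| ≤ C * t ^ θ) {x : ℝ} (hx : 1 ≤ x) :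
    |∑ k ∈ Icc 1 ⌊x⌋₊, a k / k - c * log x| ≤ |c| + (C + C / (1 - θ)) := by
  have hC : 0 ≤ C := by simpa using (abs_nonneg _).trans (hA 1 le_rfl)
  have hx0 : 0 < x := one_pos.trans_le hx
  have hpos : ∀ t ∈ Set.uIcc 1 x, 0 < t := fun t ht =>
    lt_of_lt_of_le (lt_min one_pos hx0) ht.1
  have hpos' : ∀ t ∈ Set.Icc 1 x, 0 < t := fun t ht => hpos t (Set.Icc_subset_uIcc ht)
  have habel := abs_sum_mul_sub_le ha hx (φ := fun t => t⁻¹) (φ' := fun t => -(t ^ 2)⁻¹)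
    (G := fun t => c * t) (E := fun t => C * t ^ θ)
    (fun t ht => hasDerivAt_inv (hpos' t ht).ne')
    ((continuousOn_id.pow 2).inv₀ fun t ht => (pow_pos (hpos' t ht) 2).ne').neg
    (by fun_prop) (continuousOn_const.mul (continuousOn_id.rpow_const fun t ht =>
      Or.inl (hpos' t ht).ne'))
    (fun t ht => hA t ht.1)
  have hmain : x⁻¹ * (c * x) - ∫ t in 1..x, -(t ^ 2)⁻¹ * (c * t) = c + c * log x := by
    have hcongr : ∫ t in 1..x, -(t ^ 2)⁻¹ * (c * t) = ∫ t in 1..x, -c * t⁻¹ :=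
      intervalIntegral.integral_congr fun t ht => by
        field_simp [(hpos t ht).ne']
    rw [hcongr, intervalIntegral.integral_const_mul, integral_inv_of_pos one_pos hx0, div_one]
    field_simp
    ring
  have hboundary : |x⁻¹| * (C * x ^ θ) ≤ C := by
    have hxθ : x ^ θ ≤ x := by
      simpa using Real.rpow_le_rpow_of_exponent_le hx hθ.le
    rw [abs_of_pos (inv_pos.2 hx0)]
    calc x⁻¹ * (C * x ^ θ) ≤ x⁻¹ * (C * x) := by gcongr
      _ = C := by field_simp
  have hintegral : ∫ t in 1..x, |-(t ^ 2)⁻¹| * (C * t ^ θ) ≤ C / (1 - θ) := by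
    have hcongr : ∫ t in 1..x, |-(t ^ 2)⁻¹| * (C * t ^ θ) = ∫ t in 1..x, C * t ^ (θ - 2) :=
      intervalIntegral.integral_congr fun t ht => by
        rw [abs_neg, abs_of_pos (inv_pos.2 (pow_pos (hpos t ht) 2)),
          Real.rpow_sub (hpos t ht), Real.rpow_two]
        ring
    rw [hcongr, intervalIntegral.integral_const_mul, ← mul_one_div]
    exact mul_le_mul_of_nonneg_left (integral_rpow_sub_two_le hθ hx) hC
  rw [hmain] at habel
  have hsum : ∑ k ∈ Icc 1 ⌊x⌋₊, a k / k = ∑ k ∈ Icc 1 ⌊x⌋₊, (k : ℝ)⁻¹ * a k :=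
    sum_congr rfl fun k _ => div_eq_inv_mul _ _
  calc |∑ k ∈ Icc 1 ⌊x⌋₊, a k / k - c * log x|
      = |c + (∑ k ∈ Icc 1 ⌊x⌋₊, (k : ℝ)⁻¹ * a k - (c + c * log x))| := by
        rw [hsum]; ring_nf
    _ ≤ |c| + (C + C / (1 - θ)) :=
        (abs_add_le _ _).trans (add_le_add le_rfl (habel.trans (add_le_add hboundary hintegral)))

theorem abs_sum_log_sub_pow_mul_sub_le {a : ℕ → ℝ} (ha : a 0 = 0) {c C₀ : ℝ}
    (hA : ∀ t, 1 ≤ t → |∑ k ∈ Icc 1 ⌊t⌋₊, a k - c * log t| ≤ C₀) (j : ℕ) {x : ℝ} (hx : 1 ≤ x) :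
    |∑ k ∈ Icc 1 ⌊x⌋₊, (log x - log k) ^ (j + 1) * a k - c * log x ^ (j + 2) / (j + 2)|
      ≤ C₀ * log x ^ (j + 1) := by
  have hx0 : 0 < x := one_pos.trans_le hx
  have hpos : ∀ t ∈ Set.uIcc 1 x, 0 < t := fun t ht =>
    lt_of_lt_of_le (lt_min one_pos hx0) ht.1
  have hpos' : ∀ t ∈ Set.Icc 1 x, 0 < t := fun t ht => hpos t (Set.Icc_subset_uIcc ht)
  have hlog : ContinuousOn log (Set.Icc 1 x) :=
    continuousOn_log.mono fun t ht => (hpos' t ht).ne'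
  have habel := abs_sum_mul_sub_le ha hx (φ := fun t => (log x - log t) ^ (j + 1))
    (φ' := fun t => -((j + 1) * (log x - log t) ^ j * t⁻¹)) (G := fun t => c * log t)
    (E := fun _ => C₀)
    (fun t ht => by
      refine (((hasDerivAt_log (hpos' t ht).ne').const_sub (log x)).pow (j + 1)).congr_deriv ?_
      push_cast
      ring)
    (((continuousOn_const.mul ((continuousOn_const.sub hlog).pow j)).mul
      (continuousOn_id.inv₀ fun t ht => (hpos' t ht).ne')).neg)
    (continuousOn_const.mul hlog) continuousOn_const (fun t ht => hA t ht.1)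
  have hmain : (log x - log x) ^ (j + 1) * (c * log x)
      - ∫ t in 1..x, -((j + 1) * (log x - log t) ^ j * t⁻¹) * (c * log t)
      = c * log x ^ (j + 2) / (j + 2) := by
    have hcongr : ∫ t in 1..x, -((j + 1) * (log x - log t) ^ j * t⁻¹) * (c * log t)
        = ∫ t in 1..x, -(c * (j + 1)) * ((log x - log t) ^ j * log t * t⁻¹) :=
      intervalIntegral.integral_congr fun t _ => by ring
    rw [hcongr, intervalIntegral.integral_const_mul, integral_log_sub_pow_mul_log_mul_inv j hx0]
    field_simp
    ring
  have herror : |(log x - log x) ^ (j + 1)| * C₀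
      + ∫ t in 1..x, |-((j + 1) * (log x - log t) ^ j * t⁻¹)| * C₀ = C₀ * log x ^ (j + 1) := by
    have hcongr : ∫ t in 1..x, |-((j + 1) * (log x - log t) ^ j * t⁻¹)| * C₀
        = ∫ t in 1..x, C₀ * (j + 1) * ((log x - log t) ^ j * t⁻¹) :=
      intervalIntegral.integral_congr fun t ht => by
        have hlogt : log t ≤ log x := by
          rw [Set.uIcc_of_le hx] at ht
          exact log_le_log (hpos t (Set.Icc_subset_uIcc ht)) ht.2
        have : 0 ≤ (log x - log t) ^ j := pow_nonneg (by linarith) j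
        rw [abs_neg, abs_of_nonneg (by have := hpos t ht; positivity)]
        ring
    rw [hcongr, intervalIntegral.integral_const_mul, integral_log_sub_pow_mul_inv j hx0]
    field_simp
    simp
  rwa [hmain, herror] at habel

theorem ArithmeticFunction.pdiv_natCoe_id_mul (g h : ArithmeticFunction ℝ) :
    (g * h).pdiv ↑ArithmeticFunction.id
      = g.pdiv ↑ArithmeticFunction.id * h.pdiv ↑ArithmeticFunction.id := by
  ext n
  simp only [pdiv_apply, mul_apply, natCoe_apply, id_apply, sum_div]
  refine sum_congr rfl fun p hp => ?_
  rw [← (Nat.mem_divisorsAntidiagonal.1 hp).1, Nat.cast_mul, div_mul_div_comm]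

theorem sum_Icc_mul_div_eq (g h : ArithmeticFunction ℝ) (N : ℕ) :
    ∑ m ∈ Icc 1 N, (g * h) m / m = ∑ d ∈ Icc 1 N, g d / d * ∑ e ∈ Icc 1 (N / d), h e / e := by
  have := ArithmeticFunction.sum_Ioc_mul_eq_sum_sum (g.pdiv ↑ArithmeticFunction.id)
    (h.pdiv ↑ArithmeticFunction.id) N
  rw [← ArithmeticFunction.pdiv_natCoe_id_mul] at this
  simpa [← Icc_add_one_left_eq_Ioc, ArithmeticFunction.pdiv_apply] using this

theorem abs_sum_pow_succ_div_sub_sum_le {f : ArithmeticFunction ℝ} (hf : ∀ n, 0 ≤ f n)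
    {c C₀ C : ℝ} (hT : ∀ x, 1 ≤ x → |∑ m ∈ Icc 1 ⌊x⌋₊, f m / m - c * log x| ≤ C₀) (hC : 0 ≤ C)
    {k : ℕ} (hS : ∀ y, 1 ≤ y → |∑ m ∈ Icc 1 ⌊y⌋₊, (f ^ (k + 1)) m / m
      - c ^ (k + 1) * log y ^ (k + 1) / (k + 1).factorial| ≤ C * (1 + log y) ^ k)
    {x : ℝ} (hx : 1 ≤ x) :
    |∑ m ∈ Icc 1 ⌊x⌋₊, (f ^ (k + 2)) m / m - ∑ d ∈ Icc 1 ⌊x⌋₊,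
        f d / d * (c ^ (k + 1) * (log x - log d) ^ (k + 1) / (k + 1).factorial)|
      ≤ (C₀ + |c| * log x) * (C * (1 + log x) ^ k) := by
  have hx0 : 0 < x := one_pos.trans_le hx
  have hfd : ∀ d : ℕ, 0 ≤ f d / d := fun d => div_nonneg (hf d) d.cast_nonneg
  have hR : ∀ d ∈ Icc 1 ⌊x⌋₊, |∑ e ∈ Icc 1 (⌊x⌋₊ / d), (f ^ (k + 1)) e / e
      - c ^ (k + 1) * (log x - log d) ^ (k + 1) / (k + 1).factorial| ≤ C * (1 + log x) ^ k := by
    intro d hd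
    have hd1 : (1 : ℝ) ≤ d := by exact_mod_cast (mem_Icc.1 hd).1
    have hdx : (d : ℝ) ≤ x := (Nat.cast_le.2 (mem_Icc.1 hd).2).trans (Nat.floor_le hx0.le)
    have hxd : 1 ≤ x / d := (one_le_div (by positivity)).2 hdx
    have hlog : log (x / d) = log x - log d := log_div hx0.ne' (by positivity)
    have hlogd := log_nonneg hd1
    have hlogxd := log_nonneg hxd
    calc _ ≤ C * (1 + (log x - log d)) ^ k := by
          simpa only [hlog, Nat.floor_div_natCast] using hS _ hxd
      _ ≤ C * (1 + log x) ^ k :=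
          mul_le_mul_of_nonneg_left (pow_le_pow_left₀ (by linarith) (by linarith) k) hC
  have hT' : ∑ d ∈ Icc 1 ⌊x⌋₊, f d / d ≤ C₀ + |c| * log x := by
    have := (abs_le.1 (hT x hx)).2
    have := mul_le_mul_of_nonneg_right (le_abs_self c) (log_nonneg hx)
    linarith
  rw [pow_succ', sum_Icc_mul_div_eq, ← sum_sub_distrib]
  simp_rw [← mul_sub]
  calc _ ≤ ∑ d ∈ Icc 1 ⌊x⌋₊, f d / d * (C * (1 + log x) ^ k) := by
        refine (abs_sum_le_sum_abs _ _).trans (sum_le_sum fun d hd => ?_)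
        rw [abs_mul, abs_of_nonneg (hfd d)]
        exact mul_le_mul_of_nonneg_left (hR d hd) (hfd d)
    _ = (∑ d ∈ Icc 1 ⌊x⌋₊, f d / d) * (C * (1 + log x) ^ k) := (sum_mul _ _ _).symm
    _ ≤ (C₀ + |c| * log x) * (C * (1 + log x) ^ k) := by
        have := log_nonneg hx
        gcongr

theorem abs_sum_div_mul_log_sub_pow_sub_le {f : ArithmeticFunction ℝ} {c C₀ : ℝ}
    (hT : ∀ x, 1 ≤ x → |∑ m ∈ Icc 1 ⌊x⌋₊, f m / m - c * log x| ≤ C₀) (k : ℕ) {x : ℝ}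
    (hx : 1 ≤ x) :
    |∑ d ∈ Icc 1 ⌊x⌋₊, f d / d * (c ^ (k + 1) * (log x - log d) ^ (k + 1) / (k + 1).factorial)
        - c ^ (k + 2) * log x ^ (k + 2) / (k + 2).factorial|
      ≤ |c ^ (k + 1) / (k + 1).factorial| * (C₀ * log x ^ (k + 1)) := by
  have hP := abs_sum_log_sub_pow_mul_sub_le (a := fun n => f n / n) (by simp) hT k hx
  have hscale : ∑ d ∈ Icc 1 ⌊x⌋₊,
        f d / d * (c ^ (k + 1) * (log x - log d) ^ (k + 1) / (k + 1).factorial)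
      - c ^ (k + 2) * log x ^ (k + 2) / (k + 2).factorial
      = c ^ (k + 1) / (k + 1).factorial * (∑ d ∈ Icc 1 ⌊x⌋₊, (log x - log d) ^ (k + 1) * (f d / d)
        - c * log x ^ (k + 2) / (k + 2)) := by
    rw [mul_sub, mul_sum, Nat.factorial_succ (k + 1)]
    congr 1
    · exact sum_congr rfl fun d _ => by ring
    · push_cast
      field_simp
      ring
  rw [hscale, abs_mul]
  exact mul_le_mul_of_nonneg_left hP (abs_nonneg _)

theorem exists_abs_sum_pow_div_sub_le {f : ArithmeticFunction ℝ} (hf : ∀ n, 0 ≤ f n) {c C₀ : ℝ}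
    (hT : ∀ x, 1 ≤ x → |∑ m ∈ Icc 1 ⌊x⌋₊, f m / m - c * log x| ≤ C₀) (k : ℕ) :
    ∃ C, 0 ≤ C ∧ ∀ x, 1 ≤ x →
      |∑ m ∈ Icc 1 ⌊x⌋₊, (f ^ (k + 1)) m / m - c ^ (k + 1) * log x ^ (k + 1) / (k + 1).factorial|
        ≤ C * (1 + log x) ^ k := by
  have hC₀ : 0 ≤ C₀ := (abs_nonneg _).trans (hT 1 le_rfl)
  induction k with
  | zero => exact ⟨C₀, hC₀, fun x hx => by simpa using hT x hx⟩
  | succ k ih =>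
    obtain ⟨C, hC, hS⟩ := ih
    set B := |c ^ (k + 1) / (k + 1).factorial|
    refine ⟨C * (C₀ + |c|) + B * C₀, by positivity, fun x hx => ?_⟩
    have hL : 0 ≤ log x := log_nonneg hx
    calc _ ≤ (C₀ + |c| * log x) * (C * (1 + log x) ^ k) + B * (C₀ * log x ^ (k + 1)) :=
          (abs_sub_le _ _ _).trans (add_le_add (abs_sum_pow_succ_div_sub_sum_le hf hT hC hS hx)
            (abs_sum_div_mul_log_sub_pow_sub_le hT k hx))
      _ ≤ (C₀ + |c|) * (1 + log x) * (C * (1 + log x) ^ k) + B * (C₀ * (1 + log x) ^ (k + 1)) := by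
          gcongr
          · nlinarith [abs_nonneg c]
          · linarith
      _ = (C * (C₀ + |c|) + B * C₀) * (1 + log x) ^ (k + 1) := by ring

theorem sum_dirichlet_convolution_pow_div_asymptotic_general
    (f : ArithmeticFunction ℝ) (hf : ∀ n, 0 ≤ f n) (c : ℝ)
    (h : (fun M : ℝ => (∑ m ∈ Finset.Icc 1 ⌊M⌋₊, f m) - c * M)
      =O[atTop] fun M : ℝ => M ^ ((3 : ℝ) / 5))
    (k : ℕ) (hk : 1 ≤ k) :
    (fun M : ℝ =>
        (∑ m ∈ Finset.Icc 1 ⌊M⌋₊, (f ^ k) m / m)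
          - c ^ k * Real.log M ^ k / (Nat.factorial k))
      =O[atTop] fun M : ℝ => Real.log M ^ (k - 1) := by
  obtain ⟨C₁, hF⟩ := exists_abs_sum_sub_mul_le_mul_rpow hf h (by norm_num)
  obtain ⟨j, rfl⟩ := Nat.exists_eq_add_of_le' hk
  obtain ⟨C, -, hC⟩ := exists_abs_sum_pow_div_sub_le hf
    (fun x hx => abs_sum_div_sub_mul_log_le f.map_zero (by norm_num) hF hx) j
  have hbound : (fun M : ℝ => (∑ m ∈ Icc 1 ⌊M⌋₊, (f ^ (j + 1)) m / m)
      - c ^ (j + 1) * log M ^ (j + 1) / (j + 1).factorial) =O[atTop] fun M => (1 + log M) ^ j := by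
    refine Asymptotics.IsBigO.of_bound C ?_
    filter_upwards [eventually_ge_atTop 1] with M hM
    have := log_nonneg hM
    rw [Real.norm_eq_abs, Real.norm_of_nonneg (by positivity)]
    exact hC M hM
  simpa using hbound.trans
    ((isLittleO_const_log_atTop.isBigO.add (Asymptotics.isBigO_refl _ _)).pow j)

/-- If `f` is a nonnegative arithmetic function with
`∑_{m ≤ M} f(m) = c·M + O(M^{3/5})`, then for every `k ≥ 1`,
`∑_{m ≤ M} f^{*k}(m)/m = c^k · (log M)^k / k! + O((log M)^{k-1})`. -/
theorem sum_dirichlet_convolution_pow_div_asymptotic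
    (f : ArithmeticFunction ℝ) (hf : ∀ n, 0 ≤ f n) (c : ℝ) (hc : 0 ≤ c)
    (h : (fun M : ℝ => (∑ m ∈ Finset.Icc 1 ⌊M⌋₊, f m) - c * M)
      =O[atTop] fun M : ℝ => M ^ ((3 : ℝ) / 5))
    (k : ℕ) (hk : 1 ≤ k) :
    (fun M : ℝ =>
        (∑ m ∈ Finset.Icc 1 ⌊M⌋₊, (f ^ k) m / m)
          - c ^ k * Real.log M ^ k / (Nat.factorial k))
      =O[atTop] fun M : ℝ => Real.log M ^ (k - 1) :=
  sum_dirichlet_convolution_pow_div_asymptotic_general f hf c h k hk
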